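/- In G = ⟨a,t | t² = 1, atat = tata⟩, for all integers m, n the equality t·aⁿ·t·aᵐ·t = aᵐ·t·aⁿ holds in G; hence the word t aⁿ t aᵐ t (of length |n|+|m|+3) is not geodesic, as it equals a word of length |n|+|m|+1. -/

import Mathlib

/-!
Since `t² = 1`, the relation `atat = tata` says that `a` commutes with its conjugate `tat`, hence
`aᵐ` commutes with `(tat)ⁿ = taⁿt`. Therefore `taⁿtaᵐt = aᵐ(taⁿt)t = aᵐtaⁿ`, and the right-hand
side is spelled by a word two letters shorter.
-/

/-- The relators of the presentation ⟨a,t | t² = 1, atat = tata⟩,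
with generator 0 ↦ a and generator 1 ↦ t. -/
def myRels : Set (FreeGroup (Fin 2)) :=
  { FreeGroup.of 1 * FreeGroup.of 1,
    FreeGroup.of 0 * FreeGroup.of 1 * FreeGroup.of 0 * FreeGroup.of 1 *
      (FreeGroup.of 1 * FreeGroup.of 0 * FreeGroup.of 1 * FreeGroup.of 0)⁻¹ }

/-- The group G = ⟨a,t | t² = 1, atat = tata⟩. -/
abbrev PG := PresentedGroup myRels

/-- The generator a of G. -/
def pa : PG := PresentedGroup.of 0

/-- The generator t of G. -/
def pt : PG := PresentedGroup.of 1

/-- The generating set A = {a, a⁻¹, t, t⁻¹} of G. -/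
def GenSet : Set PG := {pa, pa⁻¹, pt, pt⁻¹}

/-- `w` is a word over the alphabet A. -/
def IsWord (w : List PG) : Prop := ∀ x ∈ w, x ∈ GenSet

/-- `w` is a word over A representing the group element `g`. -/
def Represents (w : List PG) (g : PG) : Prop := IsWord w ∧ w.prod = g

open Classical in
/-- The number of t-letters of a word (occurrences of t and t⁻¹). -/
noncomputable def tCount (w : List PG) : ℕ :=
  w.countP (fun x => decide (x = pt ∨ x = pt⁻¹))

/-- The word aˣ over A: x letters `a` if x ≥ 0, |x| letters `a⁻¹` if x < 0. -/
def apow (x : ℤ) : List PG :=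
  if 0 ≤ x then List.replicate x.toNat pa else List.replicate (-x).toNat pa⁻¹

/-- A word over A is geodesic if no strictly shorter word over A represents
the same element. -/
def IsGeodesic (w : List PG) : Prop :=
  IsWord w ∧ ∀ v : List PG, IsWord v → v.prod = w.prod → w.length ≤ v.length

section Group

variable {G : Type*} [Group G] {a t : G}

theorem conj_zpow_of_mul_self_eq_one (ht : t * t = 1) (k : ℤ) :
    t * a ^ k * t = (t * a * t) ^ k := by
  have ht' : t⁻¹ = t := inv_eq_of_mul_eq_one_right ht
  simpa only [ht'] using (conj_zpow (a := t) (b := a) (i := k)).symm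

theorem mul_zpow_mul_zpow_mul_of_mul_self_eq_one (ht : t * t = 1)
    (h : a * t * a * t = t * a * t * a) (m n : ℤ) :
    t * a ^ n * t * a ^ m * t = a ^ m * t * a ^ n := by
  have hc : Commute a (t * a * t) := by simpa only [Commute, SemiconjBy, mul_assoc] using h
  calc t * a ^ n * t * a ^ m * t = (t * a * t) ^ n * a ^ m * t := by
        rw [conj_zpow_of_mul_self_eq_one ht]
    _ = a ^ m * (t * a * t) ^ n * t := by rw [(hc.zpow_zpow m n).eq]
    _ = a ^ m * t * a ^ n * (t * t) := by
        rw [← conj_zpow_of_mul_self_eq_one ht]; simp only [mul_assoc]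
    _ = a ^ m * t * a ^ n := by rw [ht, mul_one]

end Group

theorem pt_mul_self : pt * pt = 1 :=
  PresentedGroup.one_of_mem (Or.inl rfl)

theorem pa_mul_pt_mul_pa_mul_pt : pa * pt * pa * pt = pt * pa * pt * pa :=
  PresentedGroup.mk_eq_mk_of_mul_inv_mem (Or.inr rfl)

theorem IsWord.append {v w : List PG} (hv : IsWord v) (hw : IsWord w) : IsWord (v ++ w) :=
  List.forall_mem_append.mpr ⟨hv, hw⟩

theorem isWord_singleton_pt : IsWord [pt] := by
  simp [IsWord, GenSet]

theorem not_isGeodesic_of_length_lt {v w : List PG} (hv : IsWord v) (hprod : v.prod = w.prod)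
    (hlt : v.length < w.length) : ¬ IsGeodesic w :=
  fun hw => (hw.2 v hv hprod).not_gt hlt

theorem apow_length (x : ℤ) : (apow x).length = x.natAbs := by
  unfold apow; split <;> simp <;> omega

theorem apow_prod (x : ℤ) : (apow x).prod = pa ^ x := by
  unfold apow
  split
  · rw [List.prod_replicate, ← zpow_natCast, Int.toNat_of_nonneg ‹_›]
  · rw [List.prod_replicate, inv_pow, ← zpow_natCast, Int.toNat_of_nonneg (by omega), ← zpow_neg,
      neg_neg]

theorem isWord_apow (x : ℤ) : IsWord (apow x) := by
  intro y hy
  unfold apow at hy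
  split at hy <;> rw [(List.mem_replicate.mp hy).2] <;> simp [GenSet]

/-- In G, for all integers m, n we have t·aⁿ·t·aᵐ·t = aᵐ·t·aⁿ; hence the word
t aⁿ t aᵐ t, of length |n|+|m|+3, is not geodesic, as it equals a word of
length |n|+|m|+1. -/
theorem t_an_t_am_t_not_geodesic (m n : ℤ) :
    pt * pa ^ n * pt * pa ^ m * pt = pa ^ m * pt * pa ^ n ∧
    ([pt] ++ apow n ++ [pt] ++ apow m ++ [pt]).length = n.natAbs + m.natAbs + 3 ∧
    (apow m ++ [pt] ++ apow n).length = n.natAbs + m.natAbs + 1 ∧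
    (apow m ++ [pt] ++ apow n).prod = ([pt] ++ apow n ++ [pt] ++ apow m ++ [pt]).prod ∧
    ¬ IsGeodesic ([pt] ++ apow n ++ [pt] ++ apow m ++ [pt]) := by
  have hid := mul_zpow_mul_zpow_mul_of_mul_self_eq_one pt_mul_self pa_mul_pt_mul_pa_mul_pt m n
  have hlong : ([pt] ++ apow n ++ [pt] ++ apow m ++ [pt]).length = n.natAbs + m.natAbs + 3 := by
    simp only [List.length_append, apow_length, List.length_singleton]; omega
  have hshort : (apow m ++ [pt] ++ apow n).length = n.natAbs + m.natAbs + 1 := by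
    simp only [List.length_append, apow_length, List.length_singleton]; omega
  have hprod :
      (apow m ++ [pt] ++ apow n).prod = ([pt] ++ apow n ++ [pt] ++ apow m ++ [pt]).prod := by
    simp only [List.prod_append, apow_prod, List.prod_singleton, hid]
  have hword : IsWord (apow m ++ [pt] ++ apow n) :=
    ((isWord_apow m).append isWord_singleton_pt).append (isWord_apow n)
  refine ⟨hid, hlong, hshort, hprod, not_isGeodesic_of_length_lt hword hprod ?_⟩
  omega
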